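/- Let X ⊂ ℝ²₁ be a finite subspace with |X| ≥ 3, let a ∈ X, and let m_a = m(a,b,c) where b,c ∈ X∖{a} are distinct and realize the minimal Gromov product at a (i.e. Δ_{a,bc} = d̲(a)). Then for every x ∈ X∖{a}, d₁(a,x) = d₁(a,m_a) + d₁(m_a,x). -/
import Mathlib


/-- The Manhattan (taxicab) distance on `ℝ × ℝ`. -/
noncomputable def d1 (p q : ℝ × ℝ) : ℝ := |p.1 - q.1| + |p.2 - q.2|

/-- The Gromov product at `x` with respect to `y` and `z` (Manhattan metric). -/
noncomputable def gromov (x y z : ℝ × ℝ) : ℝ := (d1 x y + d1 x z - d1 y z) / 2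

/-- The pendant length of `x` in the finite subspace `X` of the Manhattan plane. -/
noncomputable def pendant (X : Finset (ℝ × ℝ)) (x : ℝ × ℝ) : ℝ :=
  sInf {g : ℝ | ∃ y ∈ X, ∃ z ∈ X, y ≠ x ∧ z ≠ x ∧ y ≠ z ∧ g = gromov x y z}

/-- `m` is the metric center of the triple `a, b, c` in the Manhattan plane. -/
noncomputable def IsMetricCenter (a b c m : ℝ × ℝ) : Prop :=
  d1 a b = d1 a m + d1 m b ∧ d1 a c = d1 a m + d1 m c ∧ d1 b c = d1 b m + d1 m c

/-- `m` is the metric center associated with the point `a` of the finite subspace `X`: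
`m = m(a,b,c)` for some pair of distinct points `b, c ∈ X \ {a}` realizing the minimal
Gromov product (the pendant length) at `a`. -/
noncomputable def IsCenterOf (X : Finset (ℝ × ℝ)) (a m : ℝ × ℝ) : Prop :=
  ∃ b ∈ X, ∃ c ∈ X, b ≠ a ∧ c ≠ a ∧ b ≠ c ∧ gromov a b c = pendant X a ∧
    IsMetricCenter a b c m

/-- 1-D betweenness from the metric equality. -/
lemma btw_of (u w v : ℝ) (h : |u - v| = |u - w| + |w - v|) :
    (u ≤ w ∧ w ≤ v) ∨ (v ≤ w ∧ w ≤ u) := by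
  rcases le_total u w with h1 | h1 <;> rcases le_total w v with h2 | h2 <;>
    rcases le_total u v with h3 | h3 <;>
    rcases abs_cases (u - v) with ⟨e1, _⟩ | ⟨e1, _⟩ <;>
    rcases abs_cases (u - w) with ⟨e2, _⟩ | ⟨e2, _⟩ <;>
    rcases abs_cases (w - v) with ⟨e3, _⟩ | ⟨e3, _⟩ <;>
    first
    | (left; constructor <;> linarith)
    | (right; constructor <;> linarith)

/-- metric equality from 1-D betweenness. -/
lemma of_btw (u w v : ℝ) (h : (u ≤ w ∧ w ≤ v) ∨ (v ≤ w ∧ w ≤ u)) :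
    |u - v| = |u - w| + |w - v| := by
  rcases h with ⟨h1, h2⟩ | ⟨h1, h2⟩
  · rw [abs_of_nonpos (by linarith), abs_of_nonpos (by linarith),
      abs_of_nonpos (by linarith)]; ring
  · rw [abs_of_nonneg (by linarith), abs_of_nonneg (by linarith),
      abs_of_nonneg (by linarith)]; ring

/-- 1-D: if `m` lies between `a` and `b` but not between `a` and `x`,
then `m` lies between `b` and `x`. -/
lemma Lbad (a b m x : ℝ) (h : |a - b| = |a - m| + |m - b|)
    (hp : |a - x| < |a - m| + |m - x|) :
    |b - x| = |b - m| + |m - x| := by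
  have hn : ¬ ((a ≤ m ∧ m ≤ x) ∨ (x ≤ m ∧ m ≤ a)) := fun hcon =>
    absurd (of_btw a m x hcon) (by linarith)
  rcases btw_of a m b h with ⟨h1, h2⟩ | ⟨h1, h2⟩
  · have hx : x ≤ m := by
      by_contra hxm
      exact hn (Or.inl ⟨h1, le_of_not_ge hxm⟩)
    exact of_btw b m x (Or.inr ⟨hx, h2⟩)
  · have hx : m ≤ x := by
      by_contra hxm
      exact hn (Or.inr ⟨le_of_not_ge hxm, h2⟩)
    exact of_btw b m x (Or.inl ⟨h1, hx⟩)

/-- 1-D: if `m` lies between `b` and `c`, then for any `x`, `m` lies between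
`b` and `x` or between `c` and `x`. -/
lemma Lgood (b c m x : ℝ) (h : |b - c| = |b - m| + |m - c|) :
    |b - x| = |b - m| + |m - x| ∨ |c - x| = |c - m| + |m - x| := by
  rcases btw_of b m c h with ⟨h1, h2⟩ | ⟨h1, h2⟩ <;> rcases le_total x m with h3 | h3
  · exact Or.inr (of_btw c m x (Or.inr ⟨h3, h2⟩))
  · exact Or.inl (of_btw b m x (Or.inl ⟨h1, h3⟩))
  · exact Or.inl (of_btw b m x (Or.inr ⟨h3, h2⟩))
  · exact Or.inr (of_btw c m x (Or.inl ⟨h1, h3⟩))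

/-- A `d1`-betweenness equality splits into coordinatewise equalities. -/
lemma d1_split (p r q : ℝ × ℝ) (h : d1 p q = d1 p r + d1 r q) :
    |p.1 - q.1| = |p.1 - r.1| + |r.1 - q.1| ∧
      |p.2 - q.2| = |p.2 - r.2| + |r.2 - q.2| := by
  have t1 := abs_sub_le p.1 r.1 q.1
  have t2 := abs_sub_le p.2 r.2 q.2
  simp only [d1] at h
  constructor <;> linarith

/-- The pendant length is a lower bound for Gromov products of admissible pairs. -/
lemma pendant_le (X : Finset (ℝ × ℝ)) (a y z : ℝ × ℝ)
    (hy : y ∈ X) (hz : z ∈ X) (hya : y ≠ a) (hza : z ≠ a) (hyz : y ≠ z) :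
    pendant X a ≤ gromov a y z := by
  have hsub : {g : ℝ | ∃ y ∈ X, ∃ z ∈ X, y ≠ a ∧ z ≠ a ∧ y ≠ z ∧ g = gromov a y z} ⊆
      (fun p : (ℝ × ℝ) × (ℝ × ℝ) => gromov a p.1 p.2) '' ((X : Set (ℝ × ℝ)) ×ˢ X) := by
    rintro g ⟨y, hy, z, hz, _, _, _, rfl⟩
    exact ⟨(y, z), ⟨hy, hz⟩, rfl⟩
  have hfin : Set.Finite
      {g : ℝ | ∃ y ∈ X, ∃ z ∈ X, y ≠ a ∧ z ≠ a ∧ y ≠ z ∧ g = gromov a y z} :=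
    Set.Finite.subset ((X.finite_toSet.prod X.finite_toSet).image _) hsub
  exact csInf_le hfin.bddBelow ⟨y, hy, z, hz, hya, hza, hyz, rfl⟩

/-- The metric center `m_a` associated with `a ∈ X` lies between `a` and every other
point of `X`. -/
theorem dist_eq_add_dist_center (X : Finset (ℝ × ℝ)) (hcard : 3 ≤ X.card)
    (a : ℝ × ℝ) (ha : a ∈ X)
    (b c : ℝ × ℝ) (hb : b ∈ X) (hc : c ∈ X) (hba : b ≠ a) (hca : c ≠ a) (hbc : b ≠ c)
    (hmin : gromov a b c = pendant X a)
    (m : ℝ × ℝ) (hm : IsMetricCenter a b c m) :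
    ∀ x ∈ X, x ≠ a → d1 a x = d1 a m + d1 m x := by
  intro x hx hxa
  obtain ⟨hab, hac, hbc'⟩ := hm
  by_cases hxb : x = b
  · subst hxb; exact hab
  by_cases hxc : x = c
  · subst hxc; exact hac
  have Hb : gromov a b c ≤ gromov a b x := by
    rw [hmin]; exact pendant_le X a b x hb hx hba hxa (fun h => hxb h.symm)
  have Hc : gromov a b c ≤ gromov a c x := by
    rw [hmin]; exact pendant_le X a c x hc hx hca hxa (fun h => hxc h.symm)
  obtain ⟨Eab1, Eab2⟩ := d1_split a m b hab
  obtain ⟨Eac1, Eac2⟩ := d1_split a m c hac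
  obtain ⟨Ebc1, Ebc2⟩ := d1_split b m c hbc'
  have t1 := abs_sub_le a.1 m.1 x.1
  have t2 := abs_sub_le a.2 m.2 x.2
  have cb1 := abs_sub_comm m.1 b.1
  have cb2 := abs_sub_comm m.2 b.2
  have cc1 := abs_sub_comm m.1 c.1
  have cc2 := abs_sub_comm m.2 c.2
  simp only [gromov, d1] at Hb Hc ⊢
  refine le_antisymm (by linarith) ?_
  by_contra hcon
  push_neg at hcon
  rcases lt_or_ge (|a.1 - x.1|) (|a.1 - m.1| + |m.1 - x.1|) with hp1 | hp1
  · have B1b := Lbad a.1 b.1 m.1 x.1 Eab1 hp1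
    have B1c := Lbad a.1 c.1 m.1 x.1 Eac1 hp1
    rcases Lgood b.2 c.2 m.2 x.2 Ebc2 with B2 | B2
    · linarith
    · linarith
  · have hp2 : |a.2 - x.2| < |a.2 - m.2| + |m.2 - x.2| := by linarith
    have B2b := Lbad a.2 b.2 m.2 x.2 Eab2 hp2
    have B2c := Lbad a.2 c.2 m.2 x.2 Eac2 hp2
    rcases Lgood b.1 c.1 m.1 x.1 Ebc1 with B1 | B1
    · linarith
    · linarith
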